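/- Let L be a real symmetric n×n positive semidefinite matrix whose nonzero eigenvalues all lie in [λ, 2] for some λ ∈ (0,2], with spectral decomposition L = ∑_i λ_i u_i u_iᵀ. Let L† denote its Moore–Penrose pseudoinverse and let A = I - L (so A^k has eigenvalue (1-λ_i)^k on u_i). For ε > 0 and integers T ≥ log(6/(ελ))/λ, N ≥ 6T/ε, K ≥ max(6T, log(6T/ε)), and any vector b in the image of L, one has ‖(L† - (T/N)·∑_{j=1}^{N} ∑_{k=0}^{K-1} P_{jT/N}(k) A^k) b‖ ≤ ε‖b‖/2. -/

import Mathlib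

/-- The Poisson probability mass function with parameter `s`. -/
noncomputable def poissonPMF (s : ℝ) (k : ℕ) : ℝ := Real.exp (-s) * s ^ k / (Nat.factorial k)

/-- `Ld` is the Moore–Penrose pseudoinverse of `L` (the four Penrose conditions). -/
def IsMoorePenrose {n : ℕ} (L Ld : Matrix (Fin n) (Fin n) ℝ) : Prop :=
  L * Ld * L = L ∧ Ld * L * Ld = Ld ∧ Matrix.transpose (L * Ld) = L * Ld ∧ Matrix.transpose (Ld * L) = Ld * L

/-!
Every matrix in the statement is a function of `L`: `L†` is `cfc (·⁻¹) L` by uniqueness of the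
Moore–Penrose inverse, and the approximation is `p(L)` for the scalar polynomial
`p = poissonSolverSum T N K`. On the range of `L` the error is therefore at most the largest
`|μ⁻¹ - p(μ)|` over the nonzero eigenvalues `μ ∈ [λ, 2]`.

For such `μ`, `μ⁻¹ = ∫₀^∞ e^{-tμ} dt`. The right Riemann sum with step `T/N` over `[0, T]` is within
`e^{-Tμ}/μ + T/N` of it, and `e^{-tμ} = ∑ₖ P_t(k) (1 - μ)^k` because `|1 - μ| ≤ 1`;
truncating at `K` costs at most `t^K/K! ≤ T^K/K!` per node. Each of the three errors is at most
`ε/6`.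
-/

open Real Finset Matrix
open scoped Nat

theorem Real.abs_exp_sub_sum_range_le (x : ℝ) (K : ℕ) :
    |exp x - ∑ k ∈ range K, x ^ k / k !| ≤ |x| ^ K / K ! * exp |x| := by
  have hexp (y : ℝ) : HasSum (fun k => y ^ k / k !) (exp y) := by
    rw [exp_eq_exp_ℝ]
    exact NormedSpace.expSeries_div_hasSum_exp y
  have htail : HasSum (fun k => x ^ (k + K) / (k + K) !) (exp x - ∑ k ∈ range K, x ^ k / k !) :=
    (hasSum_nat_add_iff' K).2 (hexp x)
  refine htail.norm_le_of_bounded ((hexp |x|).mul_left (|x| ^ K / K !)) fun k => ?_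
  have hfac : (k ! * K ! : ℝ) ≤ (k + K) ! := by
    exact_mod_cast Nat.le_of_dvd (Nat.factorial_pos _)
      (Nat.factorial_mul_factorial_dvd_factorial_add k K)
  calc ‖x ^ (k + K) / ((k + K) !)‖ = |x| ^ (k + K) / (k + K) ! := by
        rw [norm_div, norm_pow, Real.norm_eq_abs, RCLike.norm_natCast]
    _ ≤ |x| ^ (k + K) / (k ! * K !) := by gcongr
    _ = |x| ^ K / K ! * (|x| ^ k / k !) := by rw [pow_add]; field_simp

theorem abs_sum_poissonPMF_mul_pow_sub_exp_le {s x : ℝ} (hs : 0 ≤ s) (hx0 : 0 ≤ x)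
    (hx2 : x ≤ 2) (K : ℕ) :
    |∑ k ∈ range K, poissonPMF s k * (1 - x) ^ k - exp (-(s * x))| ≤ s ^ K / K ! := by
  have hy : |s * (1 - x)| ≤ s := by
    rw [abs_mul, abs_of_nonneg hs]
    exact mul_le_of_le_one_right hs (abs_le.2 ⟨by linarith, by linarith⟩)
  have hsplit : ∑ k ∈ range K, poissonPMF s k * (1 - x) ^ k - exp (-(s * x)) =
      -(exp (-s) * (exp (s * (1 - x)) - ∑ k ∈ range K, (s * (1 - x)) ^ k / k !)) := by
    rw [mul_sub, ← exp_add, mul_sum]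
    simp only [poissonPMF, mul_pow]
    ring_nf
  calc |∑ k ∈ range K, poissonPMF s k * (1 - x) ^ k - exp (-(s * x))|
      = exp (-s) * |exp (s * (1 - x)) - ∑ k ∈ range K, (s * (1 - x)) ^ k / k !| := by
        rw [hsplit, abs_neg, abs_mul, abs_exp]
    _ ≤ exp (-s) * (|s * (1 - x)| ^ K / K ! * exp |s * (1 - x)|) := by
        gcongr; exact abs_exp_sub_sum_range_le _ _
    _ ≤ exp (-s) * (s ^ K / K ! * exp s) := by gcongr
    _ = s ^ K / K ! := by rw [mul_comm, mul_assoc, ← exp_add, add_neg_cancel, exp_zero, mul_one]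

theorem inv_sub_riemannSum_exp_neg_bounds {h μ : ℝ} (hh : 0 < h) (hμ : 0 < μ) (N : ℕ) :
    0 ≤ μ⁻¹ - h * ∑ j ∈ Icc 1 N, exp (-(j * h * μ)) ∧
      μ⁻¹ - h * ∑ j ∈ Icc 1 N, exp (-(j * h * μ)) ≤ exp (-(N * h * μ)) / μ + h := by
  set u := h * μ with hu
  set r := exp (-u) with hr
  have hu0 : 0 < u := mul_pos hh hμ
  have hr1 : r < 1 := exp_lt_one_iff.2 (neg_lt_zero.2 hu0)
  have hpow (j : ℕ) : exp (-(j * h * μ)) = r ^ j := by rw [← exp_nat_mul, hu]; ring_nf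
  have hgeom : (1 - r) * ∑ j ∈ Icc 1 N, r ^ j = r * (1 - r ^ N) := by
    rw [show Icc 1 N = Ico 1 (N + 1) from rfl, sum_Ico_eq_sum_range, ← mul_neg_geom_sum r N,
      mul_sum, mul_sum, mul_sum]
    exact sum_congr rfl fun i _ => by ring
  have hur : u * r ≤ 1 - r := by
    have := mul_le_mul_of_nonneg_right (add_one_le_exp u) (exp_pos (-u)).le
    rw [← exp_add, add_neg_cancel, exp_zero, ← hr] at this
    linarith
  have hru : 1 - r ≤ u := by linarith [add_one_le_exp (-u)]
  have hrN : r ^ N ≤ 1 := pow_le_one₀ (exp_pos _).le hr1.le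
  have hrN0 : 0 ≤ r ^ N := pow_nonneg (exp_pos _).le N
  set S := ∑ j ∈ Icc 1 N, r ^ j
  have hS : μ⁻¹ - h * ∑ j ∈ Icc 1 N, exp (-(j * h * μ)) = μ⁻¹ * (1 - u * S) := by
    simp only [hpow, hu, S]; field_simp
  rw [hS, hpow, show r ^ N / μ + h = μ⁻¹ * (r ^ N + u) by rw [hu]; field_simp]
  have h1r : 0 < 1 - r := by linarith
  -- `(1 - r) S = r (1 - r^N)` and `u r ≤ 1 - r ≤ u` give `0 ≤ 1 - u S ≤ r^N + u`
  constructor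
  · refine mul_nonneg (inv_nonneg.2 hμ.le) ?_
    nlinarith
  · gcongr
    nlinarith

theorem mul_pow_div_factorial_le {T : ℝ} (hT : 0 ≤ T) {K : ℕ} (hK : 6 * T ≤ K) :
    T * (T ^ K / K !) ≤ exp (-(2 * T)) / 2 := by
  have hpow_fac : T ^ K / K ! ≤ (exp 1 / 6) ^ K := calc
    T ^ K / K ! ≤ ((K : ℝ) / 6) ^ K / K ! := by gcongr; linarith
    _ = (K : ℝ) ^ K / K ! / 6 ^ K := by rw [div_pow]; ring
    _ ≤ exp K / 6 ^ K := by gcongr; exact pow_div_factorial_le_exp _ (Nat.cast_nonneg K) K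
    _ = (exp 1 / 6) ^ K := by rw [div_pow, ← exp_nat_mul, mul_one]
  have hhalf : (exp 1 / 6) ^ K ≤ exp (-(4 * T)) := calc
    (exp 1 / 6) ^ K ≤ exp (-log 2) ^ K := by
      rw [exp_neg, exp_log two_pos]
      gcongr
      linarith [exp_one_lt_three]
    _ = exp (-(K * log 2)) := by rw [← exp_nat_mul]; ring_nf
    _ ≤ exp (-(4 * T)) := exp_le_exp.2 (by nlinarith [log_two_gt_d9])
  have hlin : 2 * T * exp (-(2 * T)) ≤ 1 := by
    have := mul_le_mul_of_nonneg_right (add_one_le_exp (2 * T)) (exp_pos (-(2 * T))).le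
    rw [← exp_add, add_neg_cancel, exp_zero] at this
    nlinarith [exp_pos (-(2 * T))]
  calc T * (T ^ K / K !) ≤ T * exp (-(2 * T) + -(2 * T)) := by
        rw [show -(2 * T) + -(2 * T) = -(4 * T) by ring]; gcongr; exact hpow_fac.trans hhalf
    _ ≤ exp (-(2 * T)) / 2 := by rw [exp_add]; nlinarith [exp_pos (-(2 * T))]

noncomputable def poissonSolverSum (T : ℝ) (N K : ℕ) (x : ℝ) : ℝ :=
  (T / N) * ∑ j ∈ Icc 1 N, ∑ k ∈ range K, poissonPMF (j * T / N) k * (1 - x) ^ k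

theorem abs_poissonSolverSum_sub_riemannSum_le {T x : ℝ} (hT : 0 ≤ T) (hx0 : 0 ≤ x)
    (hx2 : x ≤ 2) (N K : ℕ) :
    |poissonSolverSum T N K x - T / N * ∑ j ∈ Icc 1 N, exp (-(j * (T / N) * x))| ≤
      T * (T ^ K / K !) := by
  rcases N.eq_zero_or_pos with rfl | hN
  · simp only [poissonSolverSum, Nat.cast_zero, div_zero, zero_mul, sub_zero, abs_zero]
    positivity
  have hN' : (0 : ℝ) < N := Nat.cast_pos.2 hN
  have hterm : ∀ j ∈ Icc 1 N, |∑ k ∈ range K, poissonPMF (j * T / N) k * (1 - x) ^ k -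
      exp (-(j * (T / N) * x))| ≤ T ^ K / K ! := by
    intro j hj
    have hjN : (j : ℝ) ≤ N := Nat.cast_le.2 (mem_Icc.1 hj).2
    rw [← mul_div_assoc]
    refine (abs_sum_poissonPMF_mul_pow_sub_exp_le (by positivity) hx0 hx2 K).trans ?_
    gcongr
    rw [div_le_iff₀ hN']
    nlinarith
  calc |poissonSolverSum T N K x - T / N * ∑ j ∈ Icc 1 N, exp (-(j * (T / N) * x))|
      = T / N * |∑ j ∈ Icc 1 N, (∑ k ∈ range K, poissonPMF (j * T / N) k * (1 - x) ^ k -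
          exp (-(j * (T / N) * x)))| := by
        rw [poissonSolverSum, ← mul_sub, ← sum_sub_distrib, abs_mul,
          abs_of_nonneg (by positivity)]
    _ ≤ T / N * ∑ j ∈ Icc 1 N, T ^ K / K ! := by
        gcongr
        exact (abs_sum_le_sum_abs _ _).trans (sum_le_sum hterm)
    _ = T * (T ^ K / K !) := by
        rw [sum_const, Nat.card_Icc, Nat.add_sub_cancel, nsmul_eq_mul]
        field_simp

theorem abs_inv_sub_poissonSolverSum_le {lam eps T μ : ℝ} {N K : ℕ} (hlam : 0 < lam)
    (heps : 0 < eps) (hT : 0 < T) (hTlb : log (6 / (eps * lam)) / lam ≤ T)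
    (hNlb : 6 * T / eps ≤ N) (hK : 6 * T ≤ K) (hμ : lam ≤ μ) (hμ2 : μ ≤ 2) :
    |μ⁻¹ - poissonSolverSum T N K μ| ≤ eps / 2 := by
  have hμ0 : 0 < μ := hlam.trans_le hμ
  have hN : (0 : ℝ) < N := lt_of_lt_of_le (by positivity) hNlb
  have hstep : T / N ≤ eps / 6 := by
    rw [div_le_iff₀ heps] at hNlb
    rw [div_le_iff₀ hN]
    linarith
  have hexp : exp (-(T * lam)) ≤ eps * lam / 6 := by
    have h6 : 6 / (eps * lam) ≤ exp (T * lam) :=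
      (log_le_iff_le_exp (by positivity)).1 ((div_le_iff₀ hlam).1 hTlb)
    rw [exp_neg, ← inv_div]
    exact inv_anti₀ (by positivity) h6
  have htail : exp (-(T * μ)) / μ ≤ eps / 6 := calc
    exp (-(T * μ)) / μ ≤ exp (-(T * lam)) / lam := by gcongr
    _ ≤ eps * lam / 6 / lam := by gcongr
    _ = eps / 6 := by field_simp
  have htrunc : T * (T ^ K / K !) ≤ eps / 6 := by
    refine (mul_pow_div_factorial_le hT.le hK).trans ?_
    have : exp (-(2 * T)) ≤ exp (-(T * lam)) := exp_le_exp.2 (by nlinarith)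
    nlinarith
  obtain ⟨hlow, hupp⟩ := inv_sub_riemannSum_exp_neg_bounds (div_pos hT hN) hμ0 N
  rw [mul_div_cancel₀ T hN.ne'] at hupp
  have hpoly := abs_le.1 (abs_poissonSolverSum_sub_riemannSum_le hT.le hμ0.le hμ2 N K)
  rw [abs_le]
  constructor <;> linarith [hpoly.1, hpoly.2]

theorem IsMoorePenrose.unique {n : ℕ} {L X Y : Matrix (Fin n) (Fin n) ℝ}
    (hX : IsMoorePenrose L X) (hY : IsMoorePenrose L Y) : X = Y := by
  obtain ⟨hX1, hX2, hX3, hX4⟩ := hX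
  obtain ⟨hY1, hY2, hY3, hY4⟩ := hY
  have hLX : L * X = L * Y := calc
    L * X = (L * Y * (L * X))ᵀ := by rw [← mul_assoc, hY1, hX3]
    _ = L * X * (L * Y) := by rw [transpose_mul, hX3, hY3]
    _ = L * Y := by rw [← mul_assoc, hX1]
  have hXL : X * L = Y * L := calc
    X * L = (X * L * (Y * L))ᵀ := by rw [← mul_assoc, mul_assoc X, mul_assoc X, hY1, hX4]
    _ = Y * L * (X * L) := by rw [transpose_mul, hX4, hY4]
    _ = Y * L := by rw [mul_assoc, ← mul_assoc L, hX1]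
  calc X = X * L * X := hX2.symm
    _ = Y * L * Y := by rw [hXL, mul_assoc, hLX, ← mul_assoc]
    _ = Y := hY2

namespace Matrix

variable {n : ℕ} (L : Matrix (Fin n) (Fin n) ℝ)

theorem transpose_cfc (f : ℝ → ℝ) : (cfc f L)ᵀ = cfc f L := by
  rw [← conjTranspose_eq_transpose_of_trivial]
  exact (cfc_predicate f L : IsSelfAdjoint _)

theorem cfc_mul_cfc (f g : ℝ → ℝ) : cfc f L * cfc g L = cfc (fun x => f x * g x) L :=
  (cfc_mul f g L (L.finite_real_spectrum.continuousOn f)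
    (L.finite_real_spectrum.continuousOn g)).symm

theorem isMoorePenrose_cfc {f g : ℝ → ℝ} (hfgf : ∀ x, f x * g x * f x = f x)
    (hgfg : ∀ x, g x * f x * g x = g x) : IsMoorePenrose (cfc f L) (cfc g L) := by
  simp only [IsMoorePenrose, cfc_mul_cfc, transpose_cfc, hfgf, hgfg, and_self]

variable {L}

theorem IsHermitian.mul_cfc (hL : L.IsHermitian) (f : ℝ → ℝ) :
    L * cfc f L = cfc (fun x => x * f x) L := by
  nth_rewrite 1 [← cfc_id' ℝ L]
  exact cfc_mul_cfc L _ f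

/-- With the convention `0⁻¹ = 0`, inverting the eigenvalues yields the pseudoinverse. -/
theorem IsHermitian.isMoorePenrose_cfc_inv (hL : L.IsHermitian) :
    IsMoorePenrose L (cfc (·⁻¹ : ℝ → ℝ) L) := by
  have h := isMoorePenrose_cfc L (f := id) (g := (·⁻¹)) mul_inv_mul_cancel
    fun x => by simpa using mul_inv_mul_cancel x⁻¹
  rwa [cfc_id ℝ L] at h

theorem IsHermitian.cfc_poissonSolverSum (hL : L.IsHermitian) (T : ℝ) (N K : ℕ) :
    cfc (poissonSolverSum T N K) L =
      (T / N) • ∑ j ∈ Icc 1 N, ∑ k ∈ range K, poissonPMF (j * T / N) k • (1 - L) ^ k := by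
  have hcont (f : ℝ → ℝ) : ContinuousOn f (spectrum ℝ L) :=
    L.finite_real_spectrum.continuousOn f
  have hpow (k : ℕ) : cfc (fun x : ℝ => (1 - x) ^ k) L = (1 - L) ^ k := by
    rw [cfc_pow (fun x : ℝ => 1 - x) k L, cfc_sub (fun _ => (1 : ℝ)) (fun x => x) L,
      cfc_const_one ℝ L, cfc_id' ℝ L]
  have hsum {ι : Type} (s : Finset ι) (f : ι → ℝ → ℝ) :
      cfc (fun x => ∑ i ∈ s, f i x) L = ∑ i ∈ s, cfc (f i) L := by
    rw [← cfc_sum f L s fun _ _ => hcont _, Finset.sum_fn]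
  unfold poissonSolverSum
  simp only [cfc_const_mul _ _ L (hcont _), hsum, hpow]

open scoped Matrix.Norms.L2Operator

theorem IsHermitian.l2_opNorm_cfc_le {𝕜 ι : Type*} [RCLike 𝕜] [Fintype ι] [DecidableEq ι]
    {A : Matrix ι ι 𝕜} (hA : A.IsHermitian) {f : ℝ → ℝ} {c : ℝ} (hc : 0 ≤ c)
    (hf : ∀ i, |f (hA.eigenvalues i)| ≤ c) : ‖cfc f A‖ ≤ c := by
  rw [hA.cfc_eq, IsHermitian.cfc, Unitary.conjStarAlgAut_apply,
    CStarRing.norm_mul_mem_unitary _ (Unitary.star_mem (SetLike.coe_mem _)),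
    CStarRing.norm_coe_unitary_mul, l2_opNorm_diagonal, pi_norm_le_iff_of_nonneg hc]
  simpa using hf

theorem IsHermitian.sqrt_sum_cfc_mulVec_sq_le {ι : Type*} [Fintype ι] [DecidableEq ι]
    {A : Matrix ι ι ℝ} (hA : A.IsHermitian) {f : ℝ → ℝ} {c : ℝ} (hc : 0 ≤ c)
    (hf : ∀ i, |f (hA.eigenvalues i)| ≤ c) (v : ι → ℝ) :
    √(∑ i, (cfc f A *ᵥ v) i ^ 2) ≤ c * √(∑ i, v i ^ 2) := by
  have h := (cfc f A).l2_opNorm_mulVec (WithLp.toLp 2 v)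
  simp only [EuclideanSpace.norm_eq, Real.norm_eq_abs, sq_abs] at h
  exact h.trans (by gcongr; exact hA.l2_opNorm_cfc_le hc hf)

end Matrix

theorem laplacian_solver_formula_general {n : ℕ} (L Ld : Matrix (Fin n) (Fin n) ℝ)
    (hL : L.PosSemidef)
    (lam : ℝ) (hlam : 0 < lam)
    (heig : ∀ i, hL.1.eigenvalues i = 0 ∨
      (lam ≤ hL.1.eigenvalues i ∧ hL.1.eigenvalues i ≤ 2))
    (hLd : IsMoorePenrose L Ld)
    (eps T : ℝ) (N K : ℕ)
    (heps : 0 < eps) (hT : 0 < T)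
    (hTlb : Real.log (6 / (eps * lam)) / lam ≤ T)
    (hNlb : 6 * T / eps ≤ N)
    (hKlb : max (6 * T) (Real.log (6 * T / eps)) ≤ K)
    (b : Fin n → ℝ) (hb : ∃ y, L.mulVec y = b) :
    Real.sqrt (∑ i, ((Ld -
        (T / N) • ∑ j ∈ Finset.Icc 1 N, ∑ k ∈ Finset.range K,
          poissonPMF (j * T / N) k • (1 - L) ^ k).mulVec b i) ^ 2) ≤
      eps * Real.sqrt (∑ i, (b i) ^ 2) / 2 := by
  have hH := hL.1
  have hcont (f : ℝ → ℝ) : ContinuousOn f (spectrum ℝ L) :=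
    L.finite_real_spectrum.continuousOn f
  have hLd_eq : Ld = cfc (·⁻¹ : ℝ → ℝ) L := hLd.unique hH.isMoorePenrose_cfc_inv
  -- `L * Ld` fixes the range of `L`; its factor `x * x⁻¹` discards the zero eigenvalues.
  have hproj : (L * Ld) *ᵥ b = b := by
    obtain ⟨y, rfl⟩ := hb
    rw [mulVec_mulVec, hLd.1]
  have herr : (Ld - (T / N) • ∑ j ∈ Icc 1 N, ∑ k ∈ range K,
      poissonPMF (j * T / N) k • (1 - L) ^ k) *ᵥ b =
      cfc (fun x => (x⁻¹ - poissonSolverSum T N K x) * (x * x⁻¹)) L *ᵥ b := by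
    conv_lhs => rw [← hproj]
    rw [mulVec_mulVec, ← hH.cfc_poissonSolverSum, hLd_eq, hH.mul_cfc,
      ← cfc_sub _ _ L (hcont _) (hcont _), cfc_mul_cfc]
  rw [herr, mul_div_right_comm]
  refine hH.sqrt_sum_cfc_mulVec_sq_le (by positivity) (fun i => ?_) b
  rcases heig i with hzero | ⟨hlow, hupp⟩
  · simp only [hzero, _root_.inv_zero, mul_zero, abs_zero]
    positivity
  · rw [mul_inv_cancel₀ (hlam.trans_le hlow).ne', mul_one]
    exact abs_inv_sub_poissonSolverSum_le hlam heps hT hTlb hNlb (le_of_max_le_left hKlb)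
      hlow hupp

theorem laplacian_solver_formula {n : ℕ} (L Ld : Matrix (Fin n) (Fin n) ℝ)
    (hL : L.PosSemidef)
    (lam : ℝ) (hlam : 0 < lam) (hlam2 : lam ≤ 2)
    (heig : ∀ i, hL.1.eigenvalues i = 0 ∨
      (lam ≤ hL.1.eigenvalues i ∧ hL.1.eigenvalues i ≤ 2))
    (hLd : IsMoorePenrose L Ld)
    (eps T : ℝ) (N K : ℕ)
    (heps : 0 < eps) (hT : 0 < T) (hN : 0 < N) (hK : 0 < K)
    (hTlb : Real.log (6 / (eps * lam)) / lam ≤ T)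
    (hNlb : 6 * T / eps ≤ N)
    (hKlb : max (6 * T) (Real.log (6 * T / eps)) ≤ K)
    (b : Fin n → ℝ) (hb : ∃ y, L.mulVec y = b) :
    Real.sqrt (∑ i, ((Ld -
        (T / N) • ∑ j ∈ Finset.Icc 1 N, ∑ k ∈ Finset.range K,
          poissonPMF (j * T / N) k • (1 - L) ^ k).mulVec b i) ^ 2) ≤
      eps * Real.sqrt (∑ i, (b i) ^ 2) / 2 :=
  laplacian_solver_formula_general L Ld hL lam hlam heig hLd eps T N K heps hT hTlb hNlb hKlb b hb
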